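/- Let (−,−)_g be the trace form on Γ^ℚ(T) associated to the adjoint representation, and let K be the kernel of the averaging operator Γ^ℚ(T) → Γ^ℚ(T)^{W_G°}. Then the restriction of (−,−)_g to K is positive definite, and Γ^ℚ(T) = Γ^ℚ(T)^{W_G°} ⊕ K is an orthogonal direct sum for (−,−)_g. -/

import Mathlib

/-!
The averaging operator is the projection onto the invariants along its kernel `K`, which gives
the direct sum. For invariant `x`, invariance of `B` gives `B x (avg y) = B x y`, so `x ⟂ K`.
A vector of `K` isotropic for the semidefinite symmetric form lies in its radical by
Cauchy–Schwarz, hence is invariant, hence fixed by the averaging operator, hence zero.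
-/

open LinearMap

namespace Submodule

variable {R E : Type*} [Ring R] [AddCommGroup E] [Module R E] {p q : Submodule R E}

theorem existsUnique_mem_mem_eq_add_of_isCompl (hpq : IsCompl p q) (x : E) :
    ∃! u : E × E, u.1 ∈ p ∧ u.2 ∈ q ∧ x = u.1 + u.2 := by
  obtain ⟨u, v, huv, huniq⟩ := existsUnique_add_of_isCompl hpq x
  refine ⟨(u, v), ⟨u.2, v.2, huv.symm⟩, ?_⟩
  rintro ⟨r, s⟩ ⟨hr, hs, hx⟩
  obtain ⟨hru, hsv⟩ := huniq ⟨r, hr⟩ ⟨s, hs⟩ hx.symm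
  simp only [← hru, ← hsv]

end Submodule

namespace Representation

variable {k G V : Type*} [Field k] [Group G] [Fintype G] [Invertible (Fintype.card G : k)]
  [AddCommGroup V] [Module k V] {ρ : Representation k G V} {B : LinearMap.BilinForm k V}

theorem averageMap_eq_inv_smul_sum (ρ : Representation k G V) :
    ρ.averageMap = (Fintype.card G : k)⁻¹ • ∑ g : G, ρ g := by
  simp [averageMap, GroupAlgebra.average, map_sum, invOf_eq_inv]

theorem apply_averageMap_right_of_mem_invariants
    (hB : ∀ (g : G) (x y : V), B (ρ g x) (ρ g y) = B x y)
    {x : V} (hx : x ∈ ρ.invariants) (y : V) : B x (ρ.averageMap y) = B x y := by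
  have hg (g : G) : B x (ρ g y) = B x y := by rw [← hB g x y, hx g]
  rw [averageMap_eq_inv_smul_sum]
  simp [map_sum, hg, Invertible.ne_zero]

theorem apply_eq_zero_of_mem_invariants_of_mem_ker_averageMap
    (hB : ∀ (g : G) (x y : V), B (ρ g x) (ρ g y) = B x y)
    {x y : V} (hx : x ∈ ρ.invariants) (hy : y ∈ ker ρ.averageMap) : B x y = 0 := by
  rw [← apply_averageMap_right_of_mem_invariants hB hx y, mem_ker.1 hy, map_zero]

theorem apply_self_pos_of_mem_ker_averageMap [LinearOrder k] [IsStrictOrderedRing k]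
    (hsymm : LinearMap.IsSymm B) (hpsd : ∀ x, 0 ≤ B x x) (hker : ker B ≤ ρ.invariants)
    {x : V} (hx : x ∈ ker ρ.averageMap) (hx0 : x ≠ 0) : 0 < B x x := by
  refine (hpsd x).lt_of_ne fun hxx ↦ hx0 ?_
  have hinv : x ∈ ρ.invariants := hker ((B.apply_apply_same_eq_zero_iff hpsd hsymm).1 hxx.symm)
  rw [← averageMap_id ρ x hinv]
  exact mem_ker.1 hx

end Representation

theorem stmt_13_general {W V : Type*} [Group W] [Fintype W] [AddCommGroup V] [Module ℚ V]
    (ρ : Representation ℚ W V)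
    (B : LinearMap.BilinForm ℚ V)
    (hsymm : ∀ x y, B x y = B y x)
    (hpsd : ∀ x : V, 0 ≤ B x x)
    (hinv : ∀ (w : W) (x y : V), B (ρ w x) (ρ w y) = B x y)
    (hker : ∀ x : V, (∀ y : V, B x y = 0) ↔ ∀ w : W, ρ w x = x) :
    (∀ x ∈ LinearMap.ker ((Fintype.card W : ℚ)⁻¹ • ∑ w : W, ρ w), x ≠ 0 → 0 < B x x) ∧
    (∀ x y : V, (∀ w : W, ρ w x = x) →
      y ∈ LinearMap.ker ((Fintype.card W : ℚ)⁻¹ • ∑ w : W, ρ w) → B x y = 0) ∧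
    (∀ v : V, ∃! p : V × V, (∀ w : W, ρ w p.1 = p.1) ∧
      p.2 ∈ LinearMap.ker ((Fintype.card W : ℚ)⁻¹ • ∑ w : W, ρ w) ∧ v = p.1 + p.2) := by
  rw [← ρ.averageMap_eq_inv_smul_sum]
  have hkerB : LinearMap.ker B ≤ ρ.invariants := fun x hx ↦
    (hker x).1 fun y ↦ LinearMap.congr_fun hx y
  exact ⟨fun _ hx hx0 ↦
      Representation.apply_self_pos_of_mem_ker_averageMap ⟨hsymm⟩ hpsd hkerB hx hx0,
    fun _ _ hx hy ↦
      Representation.apply_eq_zero_of_mem_invariants_of_mem_ker_averageMap hinv hx hy,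
    Submodule.existsUnique_mem_mem_eq_add_of_isCompl ρ.isProj_averageMap.isCompl⟩

theorem stmt_13 {W V : Type*} [Group W] [Fintype W] [AddCommGroup V] [Module ℚ V]
    [FiniteDimensional ℚ V] (ρ : Representation ℚ W V)
    (B : LinearMap.BilinForm ℚ V)
    (hsymm : ∀ x y, B x y = B y x)
    (hpsd : ∀ x : V, 0 ≤ B x x)
    (hinv : ∀ (w : W) (x y : V), B (ρ w x) (ρ w y) = B x y)
    (hker : ∀ x : V, (∀ y : V, B x y = 0) ↔ ∀ w : W, ρ w x = x) :
    (∀ x ∈ LinearMap.ker ((Fintype.card W : ℚ)⁻¹ • ∑ w : W, ρ w), x ≠ 0 → 0 < B x x) ∧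
    (∀ x y : V, (∀ w : W, ρ w x = x) →
      y ∈ LinearMap.ker ((Fintype.card W : ℚ)⁻¹ • ∑ w : W, ρ w) → B x y = 0) ∧
    (∀ v : V, ∃! p : V × V, (∀ w : W, ρ w p.1 = p.1) ∧
      p.2 ∈ LinearMap.ker ((Fintype.card W : ℚ)⁻¹ • ∑ w : W, ρ w) ∧ v = p.1 + p.2) :=
  stmt_13_general ρ B hsymm hpsd hinv hker
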